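/- Let α ∈ [2/3, 1), let q ≥ 1 be an integer, let G be a graph and let S ⊆ V(G) be a (q,α)-well-linked set in G. Then T_S := {(A,B) ∈ S_{q+1}(G) | |S ∩ B| > α·|S|} is a tangle of order q+1 in G; in particular, for every separation (A,B) of G of order at most q, exactly one of (A,B) and (B,A) belongs to T_S, and for all (A₁,B₁),(A₂,B₂),(A₃,B₃) ∈ T_S one has G[A₁] ∪ G[A₂] ∪ G[A₃] ≠ G. -/
import Mathlib


open SimpleGraph

/-- `(A, B)` is a separation of the graph `G`: `A ∪ B = V(G)` and there is no edge of `G`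
with one endpoint in `A \ B` and the other in `B \ A`.  Its order is `(A ∩ B).ncard`. -/
def IsSep {V : Type*} (G : SimpleGraph V) (A B : Set V) : Prop :=
  A ∪ B = Set.univ ∧ ∀ a b : V, a ∈ A \ B → b ∈ B \ A → ¬ G.Adj a b

/-- `X` is an `α`-balanced separator for `S` in `G`: every connected component `C` of
`G − X` satisfies `|V(C) ∩ S| ≤ α·|S|`. -/
def BalancedSeparator {V : Type*} (G : SimpleGraph V) (α : ℝ) (S X : Set V) : Prop :=
  ∀ C : (G.induce Xᶜ).ConnectedComponent,
    (((Subtype.val '' C.supp) ∩ S).ncard : ℝ) ≤ α * (S.ncard : ℝ)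

/-- `S` is `(q, α)`-well-linked in `G`: there is no `α`-balanced separator for `S` of size
at most `q`. -/
def WellLinked {V : Type*} (G : SimpleGraph V) (q : ℕ) (α : ℝ) (S : Set V) : Prop :=
  ∀ X : Set V, X.ncard ≤ q → ¬ BalancedSeparator G α S X

/-- `F` is `S`-free in `G` (with respect to the constant `α`): for every separation
`(A₁, A₂)` of `G` of order less than `|F|` and every side containing `F`, that side
contains more than `α·|S|` vertices of `S`. -/
def SFree {V : Type*} (G : SimpleGraph V) (α : ℝ) (S F : Set V) : Prop :=
  ∀ A₁ A₂ : Set V, IsSep G A₁ A₂ → (A₁ ∩ A₂).ncard < F.ncard →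
    (F ⊆ A₁ → α * (S.ncard : ℝ) < ((A₁ ∩ S).ncard : ℝ)) ∧
    (F ⊆ A₂ → α * (S.ncard : ℝ) < ((A₂ ∩ S).ncard : ℝ))

/-- `S` is strongly linked in `G`: for every partition `{S₁, S₂}` of `S` into two nonempty
parts, there is no separation `(A₁, A₂)` of `G` with `S₁ ⊆ A₁`, `S₂ ⊆ A₂` and
`|A₁ ∩ A₂| < min {|S₁|, |S₂|}`. -/
def StronglyLinked {V : Type*} (G : SimpleGraph V) (S : Set V) : Prop :=
  ∀ S₁ S₂ A₁ A₂ : Set V, S₁ ∪ S₂ = S → Disjoint S₁ S₂ → S₁.Nonempty → S₂.Nonempty →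
    IsSep G A₁ A₂ → S₁ ⊆ A₁ → S₂ ⊆ A₂ →
    min S₁.ncard S₂.ncard ≤ (A₁ ∩ A₂).ncard

/-- `G[A₁] ∪ G[A₂] ∪ G[A₃] = G`: the three induced subgraphs jointly cover all vertices and
all edges of `G`. -/
def TriCover {V : Type*} (G : SimpleGraph V) (A₁ A₂ A₃ : Set V) : Prop :=
  A₁ ∪ A₂ ∪ A₃ = Set.univ ∧
  ∀ u v : V, G.Adj u v →
    (u ∈ A₁ ∧ v ∈ A₁) ∨ (u ∈ A₂ ∧ v ∈ A₂) ∨ (u ∈ A₃ ∧ v ∈ A₃)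

/-- `T` is a tangle of order `k` in `G`: `T` consists of separations of order less than `k`,
orients every such separation (contains exactly one of `(A,B)` and `(B,A)`), and no three
small sides of members of `T` cover `G`. -/
def IsTangle {V : Type*} (G : SimpleGraph V) (k : ℕ) (T : Set (Set V × Set V)) : Prop :=
  (∀ p ∈ T, IsSep G p.1 p.2 ∧ (p.1 ∩ p.2).ncard < k) ∧
  (∀ A B : Set V, IsSep G A B → (A ∩ B).ncard < k → ((A, B) ∈ T ↔ (B, A) ∉ T)) ∧
  (∀ p₁ ∈ T, ∀ p₂ ∈ T, ∀ p₃ ∈ T, ¬ TriCover G p₁.1 p₂.1 p₃.1)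

lemma IsSep.symm' {V : Type*} {G : SimpleGraph V} {A B : Set V} (h : IsSep G A B) :
    IsSep G B A :=
  ⟨by rw [Set.union_comm]; exact h.1, fun a b ha hb hadj => h.2 b a hb ha hadj.symm⟩

lemma walk_side {V : Type*} (G : SimpleGraph V) (A B : Set V) (hsep : IsSep G A B)
    (X : Set V) (hX : X = A ∩ B) (u v : ↥Xᶜ) (p : (G.induce Xᶜ).Walk u v)
    (hu : (u : V) ∈ A \ B) : (v : V) ∈ A \ B := by
  induction p with
  | nil => exact hu
  | @cons a b c h p ih =>
    apply ih
    have hadj : G.Adj (a : V) (b : V) := h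
    have hbX : (b : V) ∉ A ∩ B := by subst hX; exact b.2
    have hbAB : (b : V) ∈ A ∪ B := by rw [hsep.1]; trivial
    rcases hbAB with hbA | hbB
    · exact ⟨hbA, fun hbB => hbX ⟨hbA, hbB⟩⟩
    · exfalso
      exact hsep.2 a b hu ⟨hbB, fun hbA => hbX ⟨hbA, hbB⟩⟩ hadj

lemma comp_side {V : Type*} (G : SimpleGraph V) (A B : Set V) (hsep : IsSep G A B)
    (C : (G.induce (A ∩ B)ᶜ).ConnectedComponent) :
    (Subtype.val '' C.supp) ⊆ A \ B ∨ (Subtype.val '' C.supp) ⊆ B \ A := by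
  obtain ⟨v, hv⟩ := C.exists_rep
  have hvAB : (v : V) ∈ A ∪ B := by rw [hsep.1]; trivial
  have hvX : (v : V) ∉ A ∩ B := v.2
  have key : ∀ x : ↥(A ∩ B)ᶜ, x ∈ C.supp → (G.induce (A ∩ B)ᶜ).Reachable v x := by
    intro x hx
    rw [ConnectedComponent.mem_supp_iff] at hx
    have : (G.induce (A ∩ B)ᶜ).connectedComponentMk v
        = (G.induce (A ∩ B)ᶜ).connectedComponentMk x := by
      rw [hx]; exact hv
    exact (ConnectedComponent.eq.mp this)
  rcases hvAB with hvA | hvB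
  · left
    rintro _ ⟨x, hx, rfl⟩
    obtain ⟨p⟩ := key x hx
    exact walk_side G A B hsep (A ∩ B) rfl v x p ⟨hvA, fun h => hvX ⟨hvA, h⟩⟩
  · right
    rintro _ ⟨x, hx, rfl⟩
    obtain ⟨p⟩ := key x hx
    exact walk_side G B A hsep.symm' (A ∩ B) (Set.inter_comm A B) v x p
      ⟨hvB, fun h => hvX ⟨h, hvB⟩⟩

lemma exists_big {V : Type*} [Fintype V] {G : SimpleGraph V} {q : ℕ} {α : ℝ} {S : Set V}
    (hS : WellLinked G q α S) {X : Set V} (hX : X.ncard ≤ q) :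
    ∃ C : (G.induce Xᶜ).ConnectedComponent,
      α * (S.ncard : ℝ) < (((Subtype.val '' C.supp) ∩ S).ncard : ℝ) := by
  have h := hS X hX
  unfold BalancedSeparator at h
  push_neg at h
  exact h

/-- Two disjoint subsets of `S` cannot both have more than `α|S|` elements, for `α ≥ 2/3`. -/
lemma not_both_big {V : Type*} [Fintype V] {α : ℝ} (hα : 2 / 3 ≤ α) {S D E : Set V}
    (hD : D ⊆ S) (hE : E ⊆ S) (hdisj : D ∩ E = ∅)
    (h1 : α * (S.ncard : ℝ) < (D.ncard : ℝ)) (h2 : α * (S.ncard : ℝ) < (E.ncard : ℝ)) :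
    False := by
  have hsub : D ∪ E ⊆ S := Set.union_subset hD hE
  have hle : (D ∪ E).ncard ≤ S.ncard := Set.ncard_le_ncard hsub (Set.toFinite S)
  have heq : (D ∪ E).ncard = D.ncard + E.ncard :=
    Set.ncard_union_eq (Set.disjoint_iff_inter_eq_empty.mpr hdisj)
      (Set.toFinite D) (Set.toFinite E)
  have hle' : (D.ncard : ℝ) + (E.ncard : ℝ) ≤ (S.ncard : ℝ) := by
    have := heq ▸ hle
    exact_mod_cast this
  have hs0 : (0 : ℝ) ≤ (S.ncard : ℝ) := Nat.cast_nonneg _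
  nlinarith

lemma orient_core {V : Type*} [Fintype V] {G : SimpleGraph V} {q : ℕ} {α : ℝ}
    (hα : 2 / 3 ≤ α) {S : Set V} (hS : WellLinked G q α S) {A B : Set V}
    (h : IsSep G A B) (hord : (A ∩ B).ncard ≤ q) :
    (α * (S.ncard : ℝ) < ((S ∩ B).ncard : ℝ) ∧
      ¬ (α * (S.ncard : ℝ) < ((S ∩ A).ncard : ℝ))) ∨
    (α * (S.ncard : ℝ) < ((S ∩ A).ncard : ℝ) ∧
      ¬ (α * (S.ncard : ℝ) < ((S ∩ B).ncard : ℝ))) := by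
  obtain ⟨C, hC⟩ := exists_big hS hord
  set D := (Subtype.val '' C.supp) ∩ S with hDdef
  have hDS : D ⊆ S := Set.inter_subset_right
  rcases comp_side G A B h C with hside | hside
  · -- component inside A \ B
    right
    have hDA : D ⊆ S ∩ A := fun x hx => ⟨hx.2, (hside hx.1).1⟩
    constructor
    · exact lt_of_lt_of_le hC (by exact_mod_cast Set.ncard_le_ncard hDA (Set.toFinite _))
    · intro hbig
      refine not_both_big hα hDS Set.inter_subset_left ?_ hC hbig
      exact Set.eq_empty_iff_forall_notMem.mpr fun x hx => (hside hx.1.1).2 hx.2.2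
  · left
    have hDB : D ⊆ S ∩ B := fun x hx => ⟨hx.2, (hside hx.1).1⟩
    constructor
    · exact lt_of_lt_of_le hC (by exact_mod_cast Set.ncard_le_ncard hDB (Set.toFinite _))
    · intro hbig
      refine not_both_big hα hDS Set.inter_subset_left ?_ hC hbig
      exact Set.eq_empty_iff_forall_notMem.mpr fun x hx => (hside hx.1.1).2 hx.2.2

/-- Given a member of the tangle, produce a large subset of `S` avoiding the small side. -/
lemma avoid_small_side {V : Type*} [Fintype V] {G : SimpleGraph V} {q : ℕ} {α : ℝ}
    (hα : 2 / 3 ≤ α) {S : Set V} (hS : WellLinked G q α S) {A B : Set V}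
    (h : IsSep G A B) (hord : (A ∩ B).ncard ≤ q)
    (hbig : α * (S.ncard : ℝ) < ((S ∩ B).ncard : ℝ)) :
    ∃ D : Set V, D ⊆ S ∧ D ∩ A = ∅ ∧ α * (S.ncard : ℝ) < (D.ncard : ℝ) := by
  obtain ⟨C, hC⟩ := exists_big hS hord
  set D := (Subtype.val '' C.supp) ∩ S with hDdef
  have hDS : D ⊆ S := Set.inter_subset_right
  rcases comp_side G A B h C with hside | hside
  · exfalso
    refine not_both_big hα hDS Set.inter_subset_left ?_ hC hbig
    exact Set.eq_empty_iff_forall_notMem.mpr fun x hx => (hside hx.1.1).2 hx.2.2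
  · refine ⟨D, hDS, ?_, hC⟩
    exact Set.eq_empty_iff_forall_notMem.mpr fun x hx => (hside hx.1.1).2 hx.2

lemma three_inter {V : Type*} [Fintype V] {α : ℝ} (hα : 2 / 3 ≤ α) {S D₁ D₂ D₃ : Set V}
    (h₁ : D₁ ⊆ S) (h₂ : D₂ ⊆ S) (h₃ : D₃ ⊆ S)
    (b₁ : α * (S.ncard : ℝ) < (D₁.ncard : ℝ))
    (b₂ : α * (S.ncard : ℝ) < (D₂.ncard : ℝ))
    (b₃ : α * (S.ncard : ℝ) < (D₃.ncard : ℝ)) :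
    (D₁ ∩ D₂ ∩ D₃).Nonempty := by
  by_contra hne
  rw [Set.not_nonempty_iff_eq_empty] at hne
  have hU : S = (S \ D₁) ∪ (S \ D₂) ∪ (S \ D₃) := by
    calc S = S \ (D₁ ∩ D₂ ∩ D₃) := by rw [hne, Set.diff_empty]
    _ = (S \ D₁) ∪ (S \ D₂) ∪ (S \ D₃) := by rw [Set.diff_inter, Set.diff_inter]
  have hcard : S.ncard ≤ (S \ D₁).ncard + (S \ D₂).ncard + (S \ D₃).ncard := by
    calc S.ncard = ((S \ D₁) ∪ (S \ D₂) ∪ (S \ D₃)).ncard := by rw [← hU]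
    _ ≤ ((S \ D₁) ∪ (S \ D₂)).ncard + (S \ D₃).ncard := Set.ncard_union_le _ _
    _ ≤ (S \ D₁).ncard + (S \ D₂).ncard + (S \ D₃).ncard := by
        exact Nat.add_le_add_right (Set.ncard_union_le _ _) _
  have e₁ : (S \ D₁).ncard + D₁.ncard = S.ncard := by
    rw [Set.ncard_diff h₁ (Set.toFinite _)]
    exact Nat.sub_add_cancel (Set.ncard_le_ncard h₁ (Set.toFinite S))
  have e₂ : (S \ D₂).ncard + D₂.ncard = S.ncard := by
    rw [Set.ncard_diff h₂ (Set.toFinite _)]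
    exact Nat.sub_add_cancel (Set.ncard_le_ncard h₂ (Set.toFinite S))
  have e₃ : (S \ D₃).ncard + D₃.ncard = S.ncard := by
    rw [Set.ncard_diff h₃ (Set.toFinite _)]
    exact Nat.sub_add_cancel (Set.ncard_le_ncard h₃ (Set.toFinite S))
  have hcard' : (S.ncard : ℝ) ≤ ((S \ D₁).ncard : ℝ) + ((S \ D₂).ncard : ℝ)
      + ((S \ D₃).ncard : ℝ) := by exact_mod_cast hcard
  have e₁' : ((S \ D₁).ncard : ℝ) + (D₁.ncard : ℝ) = (S.ncard : ℝ) := by exact_mod_cast e₁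
  have e₂' : ((S \ D₂).ncard : ℝ) + (D₂.ncard : ℝ) = (S.ncard : ℝ) := by exact_mod_cast e₂
  have e₃' : ((S \ D₃).ncard : ℝ) + (D₃.ncard : ℝ) = (S.ncard : ℝ) := by exact_mod_cast e₃
  have hs0 : (0 : ℝ) ≤ (S.ncard : ℝ) := Nat.cast_nonneg _
  nlinarith

/-- Let `α ∈ [2/3, 1)`, `q ≥ 1`, `G` a finite graph and `S` a
`(q, α)`-well-linked set in `G`.  Then `T_S := {(A,B) ∈ S_{q+1}(G) | |S ∩ B| > α·|S|}` is a
tangle of order `q+1` in `G`; in particular, for every separation `(A,B)` of order at most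
`q`, exactly one of `(A,B)` and `(B,A)` belongs to `T_S`, and no three members of `T_S`
have small sides covering `G`. -/
theorem wellLinked_tangle {V : Type*} [Fintype V] (G : SimpleGraph V) (q : ℕ)
    (hq : 1 ≤ q) (α : ℝ) (hα₁ : 2 / 3 ≤ α) (hα₂ : α < 1) (S : Set V)
    (hS : WellLinked G q α S) :
    IsTangle G (q + 1)
      {p : Set V × Set V | IsSep G p.1 p.2 ∧ (p.1 ∩ p.2).ncard < q + 1 ∧
        α * (S.ncard : ℝ) < (((S ∩ p.2).ncard : ℕ) : ℝ)} := by
  refine ⟨fun p hp => ⟨hp.1, hp.2.1⟩, ?_, ?_⟩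
  · intro A B hsep hord
    have hord' : (A ∩ B).ncard ≤ q := Nat.lt_succ_iff.mp hord
    simp only [Set.mem_setOf_eq]
    rcases orient_core hα₁ hS hsep hord' with ⟨hB, hA⟩ | ⟨hA, hB⟩
    · constructor
      · intro _ hmem
        exact hA hmem.2.2
      · intro _
        exact ⟨hsep, hord, hB⟩
    · constructor
      · intro hmem _
        exact hB hmem.2.2
      · intro hnot
        exact absurd ⟨hsep.symm', by rwa [Set.inter_comm], hA⟩ hnot
  · rintro p₁ hp₁ p₂ hp₂ p₃ hp₃ hcover
    simp only [Set.mem_setOf_eq] at hp₁ hp₂ hp₃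
    obtain ⟨hsep₁, hord₁, hbig₁⟩ := hp₁
    obtain ⟨hsep₂, hord₂, hbig₂⟩ := hp₂
    obtain ⟨hsep₃, hord₃, hbig₃⟩ := hp₃
    obtain ⟨D₁, hD₁S, hD₁A, hD₁big⟩ :=
      avoid_small_side hα₁ hS hsep₁ (Nat.lt_succ_iff.mp hord₁) hbig₁
    obtain ⟨D₂, hD₂S, hD₂A, hD₂big⟩ :=
      avoid_small_side hα₁ hS hsep₂ (Nat.lt_succ_iff.mp hord₂) hbig₂
    obtain ⟨D₃, hD₃S, hD₃A, hD₃big⟩ :=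
      avoid_small_side hα₁ hS hsep₃ (Nat.lt_succ_iff.mp hord₃) hbig₃
    obtain ⟨s, hs⟩ := three_inter hα₁ hD₁S hD₂S hD₃S hD₁big hD₂big hD₃big
    have hsu : s ∈ p₁.1 ∪ p₂.1 ∪ p₃.1 := by rw [hcover.1]; trivial
    rcases hsu with (h | h) | h
    · have : s ∈ (∅ : Set V) := hD₁A ▸ Set.mem_inter hs.1.1 h
      exact this
    · have : s ∈ (∅ : Set V) := hD₂A ▸ Set.mem_inter hs.1.2 h
      exact this
    · have : s ∈ (∅ : Set V) := hD₃A ▸ Set.mem_inter hs.2 h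
      exact this
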